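/- Let x̃ : ℝ^M → X satisfy ‖x(u) − x̃(u)‖_X ≤ ε ‖x(u)‖_X for all u ∈ ℝ^M with 0 ≤ ε < 1, and assume η_low := inf_{u≠0} ‖x(u)‖_X / ‖u‖_pr > 0. Then for every u ≠ 0 the surrogate state satisfies ‖L x(u)‖_Γ / ‖x(u)‖_X ≥ (1−ε) · (‖L x̃(u)‖_Γ / ‖x̃(u)‖_X) − γ ε, where γ := sup_{‖w‖_X = 1} ‖L w‖_Γ. -/

import Mathlib

open Matrix

/-- The norm `‖d‖_A := √(dᵀ A⁻¹ d)` induced by the inverse of an SPD matrix `A`. -/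
noncomputable def invWeightedNorm {n : ℕ} (A : Matrix (Fin n) (Fin n) ℝ) (d : Fin n → ℝ) : ℝ :=
  Real.sqrt (d ⬝ᵥ (A⁻¹ *ᵥ d))

lemma invWeightedNorm_nonneg {n : ℕ} (A : Matrix (Fin n) (Fin n) ℝ) (d : Fin n → ℝ) :
    0 ≤ invWeightedNorm A d := Real.sqrt_nonneg _

lemma bilin_symm {n : ℕ} {Q : Matrix (Fin n) (Fin n) ℝ} (hQ : Q.IsHermitian)
    (a b : Fin n → ℝ) : a ⬝ᵥ Q *ᵥ b = b ⬝ᵥ Q *ᵥ a := by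
  rw [dotProduct_mulVec, ← mulVec_transpose, dotProduct_comm]
  congr 1
  have : Qᵀ = Q := by
    have := hQ.eq
    rwa [conjTranspose_eq_transpose_of_trivial] at this
  rw [this]

lemma dot_nonneg {n : ℕ} {Q : Matrix (Fin n) (Fin n) ℝ} (hQ : Q.PosSemidef)
    (a : Fin n → ℝ) : 0 ≤ a ⬝ᵥ Q *ᵥ a := by
  simpa using hQ.dotProduct_mulVec_nonneg a

lemma cs_posdef {n : ℕ} {Q : Matrix (Fin n) (Fin n) ℝ} (hQ : Q.PosSemidef)
    (a b : Fin n → ℝ) :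
    (a ⬝ᵥ Q *ᵥ b) ^ 2 ≤ (a ⬝ᵥ Q *ᵥ a) * (b ⬝ᵥ Q *ᵥ b) := by
  have key : ∀ t : ℝ, 0 ≤ (b ⬝ᵥ Q *ᵥ b) * (t * t) + (2 * (a ⬝ᵥ Q *ᵥ b)) * t + a ⬝ᵥ Q *ᵥ a := by
    intro t
    have h := dot_nonneg hQ (a + t • b)
    have e : (a + t • b) ⬝ᵥ Q *ᵥ (a + t • b)
        = (b ⬝ᵥ Q *ᵥ b) * (t * t) + (2 * (a ⬝ᵥ Q *ᵥ b)) * t + a ⬝ᵥ Q *ᵥ a := by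
      rw [mulVec_add, add_dotProduct, dotProduct_add, dotProduct_add,
        bilin_symm hQ.1 (t • b) a]
      rw [mulVec_smul, dotProduct_smul, smul_dotProduct, dotProduct_smul]
      simp only [smul_eq_mul]
      ring
    rw [e] at h
    exact h
  have hd := discrim_le_zero key
  unfold discrim at hd
  nlinarith [hd]

lemma invWeightedNorm_triangle {n : ℕ} {A : Matrix (Fin n) (Fin n) ℝ} (hA : A.PosDef)
    (a b : Fin n → ℝ) :
    invWeightedNorm A (a + b) ≤ invWeightedNorm A a + invWeightedNorm A b := by
  have hQ : (A⁻¹).PosSemidef := hA.inv.posSemidef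
  have h1 : 0 ≤ a ⬝ᵥ A⁻¹ *ᵥ a := dot_nonneg hQ a
  have h2 : 0 ≤ b ⬝ᵥ A⁻¹ *ᵥ b := dot_nonneg hQ b
  have hab : a ⬝ᵥ A⁻¹ *ᵥ b ≤ Real.sqrt (a ⬝ᵥ A⁻¹ *ᵥ a) * Real.sqrt (b ⬝ᵥ A⁻¹ *ᵥ b) := by
    calc a ⬝ᵥ A⁻¹ *ᵥ b ≤ |a ⬝ᵥ A⁻¹ *ᵥ b| := le_abs_self _
      _ = Real.sqrt ((a ⬝ᵥ A⁻¹ *ᵥ b) ^ 2) := (Real.sqrt_sq_eq_abs _).symm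
      _ ≤ Real.sqrt ((a ⬝ᵥ A⁻¹ *ᵥ a) * (b ⬝ᵥ A⁻¹ *ᵥ b)) :=
          Real.sqrt_le_sqrt (cs_posdef hQ a b)
      _ = Real.sqrt (a ⬝ᵥ A⁻¹ *ᵥ a) * Real.sqrt (b ⬝ᵥ A⁻¹ *ᵥ b) := Real.sqrt_mul h1 _
  have e : (a + b) ⬝ᵥ A⁻¹ *ᵥ (a + b)
      = a ⬝ᵥ A⁻¹ *ᵥ a + 2 * (a ⬝ᵥ A⁻¹ *ᵥ b) + b ⬝ᵥ A⁻¹ *ᵥ b := by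
    rw [mulVec_add, add_dotProduct, dotProduct_add, dotProduct_add, bilin_symm hQ.1 b a]
    ring
  unfold invWeightedNorm
  rw [e]
  have hs1 : 0 ≤ Real.sqrt (a ⬝ᵥ A⁻¹ *ᵥ a) := Real.sqrt_nonneg _
  have hs2 : 0 ≤ Real.sqrt (b ⬝ᵥ A⁻¹ *ᵥ b) := Real.sqrt_nonneg _
  have hsq1 : Real.sqrt (a ⬝ᵥ A⁻¹ *ᵥ a) ^ 2 = a ⬝ᵥ A⁻¹ *ᵥ a := Real.sq_sqrt h1
  have hsq2 : Real.sqrt (b ⬝ᵥ A⁻¹ *ᵥ b) ^ 2 = b ⬝ᵥ A⁻¹ *ᵥ b := Real.sq_sqrt h2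
  calc Real.sqrt (a ⬝ᵥ A⁻¹ *ᵥ a + 2 * (a ⬝ᵥ A⁻¹ *ᵥ b) + b ⬝ᵥ A⁻¹ *ᵥ b)
      ≤ Real.sqrt ((Real.sqrt (a ⬝ᵥ A⁻¹ *ᵥ a) + Real.sqrt (b ⬝ᵥ A⁻¹ *ᵥ b)) ^ 2) := by
        apply Real.sqrt_le_sqrt
        nlinarith [hab]
    _ = Real.sqrt (a ⬝ᵥ A⁻¹ *ᵥ a) + Real.sqrt (b ⬝ᵥ A⁻¹ *ᵥ b) :=
        Real.sqrt_sq (by positivity)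

lemma invWeightedNorm_smul {n : ℕ} (A : Matrix (Fin n) (Fin n) ℝ) (c : ℝ) (d : Fin n → ℝ) :
    invWeightedNorm A (c • d) = |c| * invWeightedNorm A d := by
  unfold invWeightedNorm
  rw [mulVec_smul, dotProduct_smul, smul_dotProduct, smul_eq_mul, smul_eq_mul, ← mul_assoc,
    Real.sqrt_mul (mul_self_nonneg c), Real.sqrt_mul_self_eq_abs]

lemma invWeightedNorm_le_sum {n : ℕ} (A : Matrix (Fin n) (Fin n) ℝ) (v : Fin n → ℝ) :
    invWeightedNorm A v ≤ Real.sqrt (∑ i, ∑ j, |A⁻¹ i j|) * ‖v‖ := by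
  have hdot : v ⬝ᵥ A⁻¹ *ᵥ v ≤ (∑ i, ∑ j, |A⁻¹ i j|) * ‖v‖ ^ 2 := by
    calc v ⬝ᵥ A⁻¹ *ᵥ v = ∑ i, ∑ j, v i * (A⁻¹ i j * v j) := by
          simp [dotProduct, mulVec, Finset.mul_sum]
      _ ≤ ∑ i, ∑ j, |A⁻¹ i j| * ‖v‖ ^ 2 := by
          refine Finset.sum_le_sum fun i _ => Finset.sum_le_sum fun j _ => ?_
          have h1 : |v i| ≤ ‖v‖ := by
            simpa [Real.norm_eq_abs] using norm_le_pi_norm v i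
          have h2 : |v j| ≤ ‖v‖ := by
            simpa [Real.norm_eq_abs] using norm_le_pi_norm v j
          calc v i * (A⁻¹ i j * v j) ≤ |v i * (A⁻¹ i j * v j)| := le_abs_self _
            _ = |A⁻¹ i j| * (|v i| * |v j|) := by rw [abs_mul, abs_mul]; ring
            _ ≤ |A⁻¹ i j| * (‖v‖ * ‖v‖) := by
                refine mul_le_mul_of_nonneg_left ?_ (abs_nonneg _)
                exact mul_le_mul h1 h2 (abs_nonneg _) (norm_nonneg _)
            _ = |A⁻¹ i j| * ‖v‖ ^ 2 := by ring
      _ = (∑ i, ∑ j, |A⁻¹ i j|) * ‖v‖ ^ 2 := by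
          simp [Finset.sum_mul]
  calc invWeightedNorm A v ≤ Real.sqrt ((∑ i, ∑ j, |A⁻¹ i j|) * ‖v‖ ^ 2) :=
        Real.sqrt_le_sqrt hdot
    _ = Real.sqrt (∑ i, ∑ j, |A⁻¹ i j|) * ‖v‖ := by
        rw [Real.sqrt_mul (by positivity), Real.sqrt_sq (norm_nonneg v)]

lemma invWeightedNorm_zero {n : ℕ} (A : Matrix (Fin n) (Fin n) ℝ) :
    invWeightedNorm A 0 = 0 := by
  simp [invWeightedNorm]

/-- Pointwise inequality from the proof of Proposition 3.1: for every `u ≠ 0`,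
`‖L x(u)‖_Γ / ‖x(u)‖_X ≥ (1−ε) ‖L x̃(u)‖_Γ / ‖x̃(u)‖_X − γ ε`. -/
theorem pointwise_surrogate_observability_bound {K M : ℕ}
    {X : Type*} [NormedAddCommGroup X] [InnerProductSpace ℝ X]
    (x : (Fin M → ℝ) →L[ℝ] X) (L : X →L[ℝ] (Fin K → ℝ))
    (Γ : Matrix (Fin K) (Fin K) ℝ) (hΓ : Γ.PosDef)
    (Spr : Matrix (Fin M) (Fin M) ℝ) (hpr : Spr.PosDef)
    (hη : 0 < ⨅ u : {v : Fin M → ℝ // v ≠ 0}, ‖x u.1‖ / invWeightedNorm Spr u.1)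
    (xt : (Fin M → ℝ) → X) (ε : ℝ) (hε0 : 0 ≤ ε) (hε1 : ε < 1)
    (happrox : ∀ u : Fin M → ℝ, ‖x u - xt u‖ ≤ ε * ‖x u‖)
    (γ : ℝ)
    (hγ : γ = ⨆ w : {w : X // ‖w‖ = 1}, invWeightedNorm Γ (L w.1)) :
    ∀ u : Fin M → ℝ, u ≠ 0 →
      invWeightedNorm Γ (L (x u)) / ‖x u‖
        ≥ (1 - ε) * (invWeightedNorm Γ (L (xt u)) / ‖xt u‖) - γ * ε := by
  intro u hu
  -- positivity of ‖x u‖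
  have hbb : BddBelow (Set.range fun w : {v : Fin M → ℝ // v ≠ 0} =>
      ‖x w.1‖ / invWeightedNorm Spr w.1) := by
    refine ⟨0, ?_⟩
    rintro _ ⟨w, rfl⟩
    exact div_nonneg (norm_nonneg _) (invWeightedNorm_nonneg _ _)
  have hle := ciInf_le hbb (⟨u, hu⟩ : {v : Fin M → ℝ // v ≠ 0})
  have hq : 0 < ‖x u‖ / invWeightedNorm Spr u := lt_of_lt_of_le hη hle
  have hxu : 0 < ‖x u‖ := by
    rcases (norm_nonneg (x u)).lt_or_eq with h' | h'
    · exact h'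
    · rw [← h', zero_div] at hq; exact absurd hq (lt_irrefl 0)
  have hxu0 : x u ≠ 0 := norm_pos_iff.mp hxu
  -- bounded above
  have hbddA : BddAbove (Set.range fun w : {w : X // ‖w‖ = 1} =>
      invWeightedNorm Γ (L w.1)) := by
    refine ⟨Real.sqrt (∑ i, ∑ j, |Γ⁻¹ i j|) * ‖L‖, ?_⟩
    rintro _ ⟨w, rfl⟩
    calc invWeightedNorm Γ (L w.1) ≤ Real.sqrt (∑ i, ∑ j, |Γ⁻¹ i j|) * ‖L w.1‖ :=
          invWeightedNorm_le_sum Γ _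
      _ ≤ Real.sqrt (∑ i, ∑ j, |Γ⁻¹ i j|) * ‖L‖ := by
          refine mul_le_mul_of_nonneg_left ?_ (Real.sqrt_nonneg _)
          calc ‖L w.1‖ ≤ ‖L‖ * ‖w.1‖ := L.le_opNorm _
            _ = ‖L‖ := by rw [w.2, mul_one]
  -- operator-norm type bound
  have hLbound : ∀ v : X, invWeightedNorm Γ (L v) ≤ γ * ‖v‖ := by
    intro v
    by_cases hv : v = 0
    · subst hv
      simp [invWeightedNorm_zero]
    · have hvn : 0 < ‖v‖ := norm_pos_iff.mpr hv
      have hw : ‖(‖v‖⁻¹ • v : X)‖ = 1 := norm_smul_inv_norm hv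
      have h1 : invWeightedNorm Γ (L (‖v‖⁻¹ • v)) ≤ γ := by
        rw [hγ]
        exact le_ciSup hbddA (⟨‖v‖⁻¹ • v, hw⟩ : {w : X // ‖w‖ = 1})
      rw [ContinuousLinearMap.map_smul, invWeightedNorm_smul, abs_of_nonneg (inv_nonneg.mpr hvn.le)] at h1
      calc invWeightedNorm Γ (L v) = ‖v‖ * (‖v‖⁻¹ * invWeightedNorm Γ (L v)) := by
            field_simp
        _ ≤ ‖v‖ * γ := mul_le_mul_of_nonneg_left h1 hvn.le
        _ = γ * ‖v‖ := mul_comm _ _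
  have hγ0 : 0 ≤ γ := by
    have h1 := hLbound (x u)
    have h2 := invWeightedNorm_nonneg Γ (L (x u))
    nlinarith
  -- key quantities
  set a := ‖x u‖ with ha_def
  set b := ‖xt u‖ with hb_def
  set A := invWeightedNorm Γ (L (x u)) with hA_def
  set B := invWeightedNorm Γ (L (xt u)) with hB_def
  have hA0 : 0 ≤ A := invWeightedNorm_nonneg _ _
  have hB0 : 0 ≤ B := invWeightedNorm_nonneg _ _
  have h6 : ‖xt u - x u‖ ≤ ε * a := by rw [norm_sub_rev]; exact happrox u
  have hba : (1 - ε) * a ≤ b := by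
    have h3 : a - b ≤ ‖x u - xt u‖ := norm_sub_norm_le _ _
    have h4 := happrox u
    simp only [← ha_def, ← hb_def] at h3 h4
    nlinarith
  have hb : 0 < b := lt_of_lt_of_le (by nlinarith) hba
  have hBA : B ≤ A + γ * (ε * a) := by
    have hd : B ≤ A + invWeightedNorm Γ (L (xt u - x u)) := by
      have he : L (xt u) = L (x u) + L (xt u - x u) := by
        rw [← map_add]; congr 1; abel
      rw [hB_def, he]
      exact invWeightedNorm_triangle hΓ _ _
    have h5 := hLbound (xt u - x u)
    have h7 : γ * ‖xt u - x u‖ ≤ γ * (ε * a) := mul_le_mul_of_nonneg_left h6 hγ0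
    linarith
  -- final chain
  rw [ge_iff_le, sub_le_iff_le_add]
  have hε' : (0:ℝ) < 1 - ε := by linarith
  calc (1 - ε) * (B / b) ≤ (1 - ε) * (B / ((1 - ε) * a)) := by
        refine mul_le_mul_of_nonneg_left ?_ hε'.le
        exact div_le_div_of_nonneg_left hB0 (by positivity) hba
    _ = B / a := by field_simp
    _ ≤ (A + γ * (ε * a)) / a := by
        gcongr
    _ = A / a + γ * ε := by field_simp
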